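/- Fix a ≥ 0 and let 𝔤 = 𝔯'_{3,a} be ℝ³ with brackets [e₁,e₂] = a e₂ - e₃, [e₁,e₃] = e₂ + a e₃. Then the inner product making {e₁,e₂,e₃} orthonormal is Einstein: its Ricci operator equals -2a² · id. -/
import Mathlib


open Matrix

noncomputable section

/-- standard basis of ℝ³ -/
def e (i : Fin 3) : Fin 3 → ℝ := Pi.single i 1

/-- standard inner product on ℝ³ (the basis `e` is orthonormal) -/
def dotp (x y : Fin 3 → ℝ) : ℝ := ∑ i, x i * y i

/-- Levi-Civita connection of the metric Lie algebra (ℝ³, br, dotp), via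
    2⟨∇_X Y, Z⟩ = ⟨[Z,X],Y⟩ + ⟨X,[Z,Y]⟩ + ⟨[X,Y],Z⟩. -/
def nabla (br : (Fin 3 → ℝ) → (Fin 3 → ℝ) → (Fin 3 → ℝ)) (X Y : Fin 3 → ℝ) :
    Fin 3 → ℝ :=
  fun k => (1/2) * (dotp (br (e k) X) Y + dotp X (br (e k) Y) + dotp (br X Y) (e k))

/-- Riemannian curvature R(X,Y)Z = ∇_X∇_Y Z - ∇_Y∇_X Z - ∇_{[X,Y]}Z. -/
def curv (br : (Fin 3 → ℝ) → (Fin 3 → ℝ) → (Fin 3 → ℝ)) (X Y Z : Fin 3 → ℝ) :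
    Fin 3 → ℝ :=
  nabla br X (nabla br Y Z) - nabla br Y (nabla br X Z) - nabla br (br X Y) Z

/-- Ricci operator Ric(X) = Σᵢ R(X,eᵢ)eᵢ. -/
def ric (br : (Fin 3 → ℝ) → (Fin 3 → ℝ) → (Fin 3 → ℝ)) (X : Fin 3 → ℝ) :
    Fin 3 → ℝ :=
  ∑ i, curv br X (e i) (e i)

/-- The bracket of 𝔯'_{3,a} : [e₁,e₂]=a e₂ - e₃, [e₁,e₃]=e₂+a e₃, [e₂,e₃]=0. -/
def br3a' (a : ℝ) (x y : Fin 3 → ℝ) : Fin 3 → ℝ :=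
  ![0,
    a * (x 0 * y 1 - x 1 * y 0) + (x 0 * y 2 - x 2 * y 0),
    -(x 0 * y 1 - x 1 * y 0) + a * (x 0 * y 2 - x 2 * y 0)]


lemma nabla_br3a' (a : ℝ) (X Y : Fin 3 → ℝ) :
    nabla (br3a' a) X Y =
      ![a * (X 1 * Y 1 + X 2 * Y 2), X 0 * Y 2 - a * (X 1 * Y 0),
        -(X 0 * Y 1) - a * (X 2 * Y 0)] := by
  funext k
  fin_cases k <;>
  · simp [nabla, dotp, br3a', e, Fin.sum_univ_three, Pi.single_apply]
    try ring

/-- The standard inner product on 𝔯'_{3,a} is Einstein: Ric = -2a² · id. -/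
theorem r3a'_einstein (a : ℝ) (ha : 0 ≤ a) :
    ∀ i : Fin 3, ric (br3a' a) (e i) = (-(2 * a^2)) • e i := by
  intro i
  funext k
  simp only [ric, curv, Fin.sum_univ_three, nabla_br3a']
  fin_cases i <;> fin_cases k <;>
  · simp [e, br3a', Pi.single_apply]
    try ring
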